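/- Under hypothesis (H), if z lies on the geodesic from x to y, i.e. d(x,z) + d(z,y) = d(x,y), then G(x,y) · G(z,z) = G(x,z) · G(z,y). -/

import Mathlib

/-!
Let `F(x, z) = ∑ₙ fₙ(x, z)` be the probability that the walk from `x` ever reaches `z`, where
`fₙ(x, z)` is the probability that it first does so at time `n`. In a tree every walk from `x` to
`y` passes through each vertex `z` of the geodesic from `x` to `y`, so splitting it at its first
visit to `z` gives `pₙ(x, y) = ∑_{k + m = n} f_k(x, z) p_m(z, y)`, whence
`G(x, y) = F(x, z) G(z, y)`; the case `y = z` gives `G(x, z) = F(x, z) G(z, z)`.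

The series converge because (H) makes the walk drift away from any fixed vertex `u`: only one
neighbour of `v ≠ u` is closer to `u`, and it is chosen with probability at most `1/2 - η`, so for
suitable `r, ρ < 1` the function `v ↦ r ^ d(v, u)` satisfies `P f ≤ ρ f`, giving
`pₙ(v, u) ≤ ρⁿ r ^ d(v, u)`.
-/

open scoped Classical

noncomputable section

/-- The `n`-step transition probabilities of the nearest-neighbour walk with
one-step transition probabilities `p`. -/
def pn {S : Type*} (p : S → S → ℝ) : ℕ → S → S → ℝ
  | 0, x, y => if x = y then 1 else 0
  | n + 1, x, y => ∑' z, p x z * pn p n z y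

/-- The Green function `G(x,y) = ∑_n p_n(x,y)`. -/
def green {S : Type*} (p : S → S → ℝ) (x y : S) : ℝ := ∑' n, pn p n x y

namespace SimpleGraph

variable {V : Type*} {G : SimpleGraph V} {u v w t x y z : V}

lemma IsAcyclic.eq_of_adj_of_dist_add_one (hG : G.IsAcyclic) {w₁ w₂ : V}
    (h₁ : G.Adj v w₁) (h₂ : G.Adj v w₂)
    (hd₁ : G.dist w₁ u + 1 = G.dist v u) (hd₂ : G.dist w₂ u + 1 = G.dist v u) : w₁ = w₂ := by
  have hvu : G.Reachable v u := Reachable.of_dist_ne_zero (by omega)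
  obtain ⟨q₁, hq₁⟩ := (h₁.symm.reachable.trans hvu).exists_walk_length_eq_dist
  obtain ⟨q₂, hq₂⟩ := (h₂.symm.reachable.trans hvu).exists_walk_length_eq_dist
  have hP₁ := (q₁.cons h₁).isPath_of_length_eq_dist (by rw [Walk.length_cons]; omega)
  have hP₂ := (q₂.cons h₂).isPath_of_length_eq_dist (by rw [Walk.length_cons]; omega)
  have hP := (hG.subsingleton_path v u).elim ⟨_, hP₁⟩ ⟨_, hP₂⟩
  simpa only [Walk.snd_cons] using congrArg (fun P : G.Path v u => P.1.snd) hP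

lemma IsTree.dist_eq_add_one_or_eq_add_one_of_adj (hG : G.IsTree) (u : V) (hadj : G.Adj v w) :
    G.dist w u = G.dist v u + 1 ∨ G.dist v u = G.dist w u + 1 := by
  simpa only [dist_comm (u := u), or_comm] using hG.dist_eq_dist_add_one_of_adj u hadj

lemma Connected.exists_adj_dist_add_one (hG : G.Connected) (hne : v ≠ u) :
    ∃ t, G.Adj v t ∧ G.dist t u + 1 = G.dist v u := by
  obtain ⟨q, hq⟩ := hG.exists_walk_length_eq_dist v u
  cases q with
  | nil => exact absurd rfl hne
  | @cons _ t _ hadj q =>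
    refine ⟨t, hadj, le_antisymm ?_ ?_⟩
    · rw [← hq, Walk.length_cons]; exact Nat.succ_le_succ (dist_le q)
    · have := hG.dist_triangle (u := v) (v := t) (w := u)
      rw [dist_eq_one_iff_adj.mpr hadj] at this
      omega

lemma IsTree.dist_eq_add_one_of_adj_of_ne (hG : G.IsTree) (ht : G.Adj v t)
    (htd : G.dist t u + 1 = G.dist v u) (hw : G.Adj v w) (hwt : w ≠ t) :
    G.dist w u = G.dist v u + 1 :=
  (hG.dist_eq_add_one_or_eq_add_one_of_adj u hw).resolve_right
    fun hwd => hwt (hG.isAcyclic.eq_of_adj_of_dist_add_one hw ht hwd.symm htd)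

lemma IsTree.dist_add_dist_eq_of_adj (hG : G.IsTree) (hxz : x ≠ z)
    (hgeo : G.dist x z + G.dist z y = G.dist x y) (hw : G.Adj x w) :
    G.dist w z + G.dist z y = G.dist w y := by
  have htri := hG.connected.dist_triangle (u := w) (v := z) (w := y)
  obtain hwz | hwz := hG.dist_eq_add_one_or_eq_add_one_of_adj z hw <;>
  obtain hwy | hwy := hG.dist_eq_add_one_or_eq_add_one_of_adj y hw
  · omega
  · obtain ⟨t, ht, htz⟩ := hG.connected.exists_adj_dist_add_one hxz
    have hty : G.dist t y + 1 = G.dist x y := by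
      have := hG.connected.dist_triangle (u := t) (v := z) (w := y)
      have := hG.dist_eq_add_one_or_eq_add_one_of_adj y ht
      omega
    have := hG.isAcyclic.eq_of_adj_of_dist_add_one hw ht hwy.symm hty
    subst this
    omega
  · omega
  · omega

end SimpleGraph

def firstPassage {S : Type*} (p : S → S → ℝ) (z : S) : ℕ → S → ℝ
  | 0, x => if x = z then 1 else 0
  | n + 1, x => if x = z then 0 else ∑' w, p x w * firstPassage p z n w

section RandomWalk

open Finset SimpleGraph

variable {S : Type*} {p : S → S → ℝ}

lemma pn_nonneg (hp : ∀ x y, 0 ≤ p x y) (n : ℕ) (x y : S) : 0 ≤ pn p n x y := by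
  induction n generalizing x with
  | zero => rw [pn]; positivity
  | succ n ih => rw [pn]; exact tsum_nonneg fun w => mul_nonneg (hp x w) (ih w)

lemma firstPassage_nonneg (hp : ∀ x y, 0 ≤ p x y) (z : S) (n : ℕ) (x : S) :
    0 ≤ firstPassage p z n x := by
  induction n generalizing x with
  | zero => rw [firstPassage]; positivity
  | succ n ih =>
    rw [firstPassage]
    split_ifs
    · rfl
    · exact tsum_nonneg fun w => mul_nonneg (hp x w) (ih w)

variable {G : SimpleGraph S} [∀ x : S, Fintype (G.neighborSet x)]

lemma tsum_mul_eq_sum_neighborFinset (hp_zero : ∀ x y, ¬ G.Adj x y → p x y = 0) (x : S)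
    (g : S → ℝ) : ∑' w, p x w * g w = ∑ w ∈ G.neighborFinset x, p x w * g w :=
  tsum_eq_sum fun w hw => by rw [hp_zero x w (by simpa using hw), zero_mul]

lemma firstPassage_le_pn (hp : ∀ x y, 0 ≤ p x y) (hp_zero : ∀ x y, ¬ G.Adj x y → p x y = 0)
    (z : S) (n : ℕ) (x : S) : firstPassage p z n x ≤ pn p n x z := by
  induction n generalizing x with
  | zero => rw [firstPassage, pn]
  | succ n ih =>
    rw [firstPassage, pn]
    split_ifs
    · exact pn_nonneg hp (n + 1) x z
    · rw [tsum_mul_eq_sum_neighborFinset hp_zero, tsum_mul_eq_sum_neighborFinset hp_zero]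
      exact sum_le_sum fun w _ => mul_le_mul_of_nonneg_left (ih w) (hp x w)

lemma pn_mul_le_of_drift (hp : ∀ x y, 0 ≤ p x y) (hp_zero : ∀ x y, ¬ G.Adj x y → p x y = 0)
    {f : S → ℝ} (hf : ∀ v, 0 ≤ f v) {ρ : ℝ} (hρ : 0 ≤ ρ) {u : S}
    (hdrift : ∀ v, ∑ w ∈ G.neighborFinset v, p v w * f w ≤ ρ * f v) (n : ℕ) (v : S) :
    pn p n v u * f u ≤ ρ ^ n * f v := by
  induction n generalizing v with
  | zero =>
    rw [pn, pow_zero, one_mul]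
    split_ifs with hvu
    · rw [hvu, one_mul]
    · rw [zero_mul]; exact hf v
  | succ n ih =>
    calc pn p (n + 1) v u * f u
        = ∑ w ∈ G.neighborFinset v, p v w * (pn p n w u * f u) := by
          rw [pn, tsum_mul_eq_sum_neighborFinset hp_zero, sum_mul]
          simp only [mul_assoc]
      _ ≤ ∑ w ∈ G.neighborFinset v, p v w * (ρ ^ n * f w) :=
          sum_le_sum fun w _ => mul_le_mul_of_nonneg_left (ih w) (hp v w)
      _ = ρ ^ n * ∑ w ∈ G.neighborFinset v, p v w * f w := by
          rw [mul_sum]; simp only [mul_left_comm]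
      _ ≤ ρ ^ n * (ρ * f v) := mul_le_mul_of_nonneg_left (hdrift v) (pow_nonneg hρ n)
      _ = ρ ^ (n + 1) * f v := by ring

lemma summable_pn_of_drift (hp : ∀ x y, 0 ≤ p x y) (hp_zero : ∀ x y, ¬ G.Adj x y → p x y = 0)
    {f : S → ℝ} (hf : ∀ v, 0 ≤ f v) {ρ : ℝ} (hρ0 : 0 ≤ ρ) (hρ1 : ρ < 1) {u : S} (hfu : 0 < f u)
    (hdrift : ∀ v, ∑ w ∈ G.neighborFinset v, p v w * f w ≤ ρ * f v) (v : S) :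
    Summable fun n => pn p n v u := by
  refine .of_nonneg_of_le (pn_nonneg hp · v u) (fun n => ?_)
    ((summable_geometric_of_lt_one hρ0 hρ1).mul_right (f v / f u))
  rw [← mul_div_assoc, le_div_iff₀ hfu]
  exact pn_mul_le_of_drift hp hp_zero hf hρ0 hdrift n v

end RandomWalk

-- `r = 1 / (2 (1 - q))` makes the last inequality an equality, and `ρ < 1` as `(1 - 2 q)² > 0`.
lemma exists_drift_constants {q : ℝ} (hq0 : 0 ≤ q) (hq : q < 1 / 2) :
    ∃ r ρ : ℝ, 0 < r ∧ r ≤ 1 ∧ r ≤ ρ ∧ ρ < 1 ∧ q + (1 - q) * r ^ 2 ≤ ρ * r := by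
  have h1q : 0 < 1 - q := by linarith
  refine ⟨1 / (2 * (1 - q)), 2 * q * (1 - q) + 1 / 2, by positivity, ?_, ?_, ?_, ?_⟩
  · rw [div_le_one (by positivity)]; linarith
  · rw [div_le_iff₀ (by positivity)]
    nlinarith [mul_nonneg hq0 (by nlinarith : (0 : ℝ) ≤ 4 * (1 - q) ^ 2 - 1)]
  · nlinarith [sq_pos_of_pos (by linarith : (0 : ℝ) < 1 / 2 - q)]
  · exact le_of_eq (by field_simp)

namespace SimpleGraph.IsTree

open Finset

variable {S : Type*} {G : SimpleGraph S} [∀ x : S, Fintype (G.neighborSet x)] {p : S → S → ℝ}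

lemma sum_mul_pow_dist_le (hT : G.IsTree)
    (hp_sum : ∀ x, ∑ y ∈ G.neighborFinset x, p x y = 1) {q r ρ : ℝ}
    (hpq : ∀ x y, G.Adj x y → p x y ≤ q) (hr0 : 0 ≤ r) (hr1 : r ≤ 1) (hrρ : r ≤ ρ)
    (hstep : q + (1 - q) * r ^ 2 ≤ ρ * r) (u v : S) :
    ∑ w ∈ G.neighborFinset v, p v w * r ^ G.dist w u ≤ ρ * r ^ G.dist v u := by
  by_cases hvu : v = u
  · subst hvu
    have hnbr : ∀ w ∈ G.neighborFinset v, p v w * r ^ G.dist w v = p v w * r := fun w hw => by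
      rw [dist_comm, dist_eq_one_iff_adj.mpr ((G.mem_neighborFinset v w).mp hw), pow_one]
    rw [sum_congr rfl hnbr, ← sum_mul, hp_sum, dist_self]
    simpa using hrρ
  obtain ⟨t, ht, htd⟩ := hT.connected.exists_adj_dist_add_one hvu
  have htN : t ∈ G.neighborFinset v := (G.mem_neighborFinset v t).mpr ht
  have hrest : ∀ w ∈ (G.neighborFinset v).erase t,
      p v w * r ^ G.dist w u = p v w * r ^ (G.dist t u + 2) := fun w hw => by
    obtain ⟨hwt, hwN⟩ := mem_erase.mp hw
    rw [hT.dist_eq_add_one_of_adj_of_ne ht htd ((G.mem_neighborFinset v w).mp hwN) hwt, ← htd]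
  have hsum_rest : ∑ w ∈ (G.neighborFinset v).erase t, p v w = 1 - p v t := by
    rw [← hp_sum v, ← sum_erase_add _ _ htN, add_sub_cancel_right]
  rw [← sum_erase_add _ _ htN, sum_congr rfl hrest, ← sum_mul, hsum_rest, ← htd]
  have hpt : p v t + (1 - p v t) * r ^ 2 ≤ q + (1 - q) * r ^ 2 := by
    nlinarith [hpq v t ht, pow_le_one₀ hr0 hr1 (n := 2)]
  calc (1 - p v t) * r ^ (G.dist t u + 2) + p v t * r ^ G.dist t u
      = r ^ G.dist t u * (p v t + (1 - p v t) * r ^ 2) := by ring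
    _ ≤ r ^ G.dist t u * (ρ * r) :=
        mul_le_mul_of_nonneg_left (hpt.trans hstep) (pow_nonneg hr0 _)
    _ = ρ * r ^ (G.dist t u + 1) := by ring

lemma summable_pn (hT : G.IsTree) (hp : ∀ x y, 0 ≤ p x y)
    (hp_zero : ∀ x y, ¬ G.Adj x y → p x y = 0)
    (hp_sum : ∀ x, ∑ y ∈ G.neighborFinset x, p x y = 1) {q : ℝ} (hq0 : 0 ≤ q) (hq : q < 1 / 2)
    (hpq : ∀ x y, G.Adj x y → p x y ≤ q) (v u : S) : Summable fun n => pn p n v u := by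
  obtain ⟨r, ρ, hr0, hr1, hrρ, hρ1, hstep⟩ := exists_drift_constants hq0 hq
  exact summable_pn_of_drift hp hp_zero (fun w => pow_nonneg hr0.le (G.dist w u))
    (hr0.le.trans hrρ) hρ1 (pow_pos hr0 _)
    (hT.sum_mul_pow_dist_le hp_sum hpq hr0.le hr1 hrρ hstep u) v

lemma pn_eq_sum_firstPassage_mul (hT : G.IsTree)
    (hp_zero : ∀ x y, ¬ G.Adj x y → p x y = 0) {z u : S} (n : ℕ) {x : S}
    (hgeo : G.dist x z + G.dist z u = G.dist x u) :
    pn p n x u = ∑ kl ∈ antidiagonal n, firstPassage p z kl.1 x * pn p kl.2 z u := by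
  induction n generalizing x with
  | zero =>
    rw [Nat.antidiagonal_zero, sum_singleton]
    by_cases hxz : x = z
    · rw [hxz, firstPassage, if_pos rfl, one_mul]
    · have hxu : x ≠ u := by
        rintro rfl
        exact hxz (hT.connected.dist_eq_zero_iff.mp (by rw [dist_self] at hgeo; omega))
      rw [pn, firstPassage, if_neg hxz, if_neg hxu, zero_mul]
  | succ n ih =>
    rw [Nat.sum_antidiagonal_succ]
    by_cases hxz : x = z
    · subst hxz
      simp only [firstPassage, if_true, zero_mul, sum_const_zero, one_mul, add_zero]
    · have hstep : ∀ w ∈ G.neighborFinset x, p x w * pn p n w u =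
          ∑ kl ∈ antidiagonal n, p x w * (firstPassage p z kl.1 w * pn p kl.2 z u) :=
        fun w hw => by
          rw [ih (hT.dist_add_dist_eq_of_adj hxz hgeo ((G.mem_neighborFinset x w).mp hw)),
            mul_sum]
      simp only [firstPassage, if_neg hxz, zero_mul, zero_add, pn,
        tsum_mul_eq_sum_neighborFinset hp_zero, sum_mul]
      rw [sum_congr rfl hstep, sum_comm]
      simp only [mul_assoc]

lemma green_eq_tsum_firstPassage_mul_green (hT : G.IsTree) (hp : ∀ x y, 0 ≤ p x y)
    (hp_zero : ∀ x y, ¬ G.Adj x y → p x y = 0) (hsumm : ∀ v u, Summable fun n => pn p n v u)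
    {x z u : S} (hgeo : G.dist x z + G.dist z u = G.dist x u) :
    green p x u = (∑' n, firstPassage p z n x) * green p z u := by
  have hF : Summable fun n => ‖firstPassage p z n x‖ := by
    simp only [Real.norm_of_nonneg (firstPassage_nonneg hp z _ x)]
    exact .of_nonneg_of_le (firstPassage_nonneg hp z · x) (firstPassage_le_pn hp hp_zero z · x)
      (hsumm x z)
  have hG : Summable fun n => ‖pn p n z u‖ := by
    simpa only [Real.norm_of_nonneg (pn_nonneg hp _ z u)] using hsumm z u
  rw [green, green, tsum_mul_tsum_eq_tsum_sum_antidiagonal_of_summable_norm hF hG]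
  exact tsum_congr fun n => hT.pn_eq_sum_firstPassage_mul hp_zero n hgeo

end SimpleGraph.IsTree

/-- Under hypothesis (H), if `z` lies on the geodesic from
`x` to `y` then `G(x,y) ⬝ G(z,z) = G(x,z) ⬝ G(z,y)`. -/
theorem green_mul_of_mem_geodesic
    {S : Type*} [Countable S] (G : SimpleGraph S)
    [∀ x : S, Fintype (G.neighborSet x)]
    (hconn : G.Connected) (hacyc : G.IsAcyclic)
    (p : S → S → ℝ)
    (hp_pos : ∀ x y, 0 < p x y ↔ G.Adj x y)
    (hp_zero : ∀ x y, ¬ G.Adj x y → p x y = 0)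
    (hp_sum : ∀ x, ∑ y ∈ G.neighborFinset x, p x y = 1)
    (ε η : ℝ) (hε : 0 < ε) (hη : 0 < η)
    (hH : ∀ x y, G.Adj x y → ε ≤ p x y ∧ p x y ≤ 1 / 2 - η) :
    ∀ x y z : S, G.dist x z + G.dist z y = G.dist x y →
      green p x y * green p z z = green p x z * green p z y := by
  intro x y z hgeo
  have hT : G.IsTree := ⟨hconn, hacyc⟩
  have hp : ∀ x y, 0 ≤ p x y := fun x y => by
    by_cases h : G.Adj x y
    · exact ((hp_pos x y).mpr h).le
    · exact (hp_zero x y h).ge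
  have hq0 : 0 ≤ 1 / 2 - η := by
    obtain ⟨w, hw⟩ := Finset.nonempty_of_sum_ne_zero (by rw [hp_sum x]; exact one_ne_zero)
    have := hH x w ((G.mem_neighborFinset x w).mp hw)
    linarith
  have hsumm := hT.summable_pn hp hp_zero hp_sum hq0 (by linarith) fun x y h => (hH x y h).2
  rw [hT.green_eq_tsum_firstPassage_mul_green hp hp_zero hsumm hgeo,
    hT.green_eq_tsum_firstPassage_mul_green hp hp_zero hsumm
      (by simp : G.dist x z + G.dist z z = G.dist x z)]
  ring

end
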